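/- arXiv:1803.06710 — 2 statements merged into one kernel-verified Lean document; each statement's English description precedes it below -/
import Mathlib

section
/- The number of labeled graphs on vertex set {1,...,n} whose vertex set can be partitioned into four cliques, each of size between (n−3)/4 and (n+3)/4, is at least 2^{(3/4)·C(n,2) − 3n}. -/
/-!
The four residue classes mod 4 are balanced, and every graph whose complement is a subgraph of the
Turán graph `T(n,4)` (edges between different classes) contains them as cliques. There are
`2 ^ e(T(n,4))` such graphs, and since every vertex of `T(n,4)` has degree at least `3(n-1)/4`,
the handshake lemma gives `e(T(n,4)) ≥ (3/4)·C(n,2)`.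
-/

open Finset SimpleGraph

namespace Fin

theorem card_filter_val_mod_eq (n : ℕ) {r i : ℕ} (hi : i < r) :
    #{v : Fin n | v % r = i} = n / r + if i < n % r then 1 else 0 := by
  rw [card_filter, Fin.sum_univ_eq_sum_range (fun k => if k % r = i then 1 else 0) n,
    ← card_filter, ← Nat.count_eq_card_filter_range]
  simpa [Nat.ModEq, Nat.mod_eq_of_lt hi] using Nat.count_modEq_card n (i.zero_le.trans_lt hi) i

theorem mul_card_filter_val_mod_le (n : ℕ) {r i : ℕ} (hi : i < r) :
    r * #{v : Fin n | v % r = i} ≤ n + (r - 1) := by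
  have := Nat.div_add_mod n r
  rw [card_filter_val_mod_eq n hi]
  split_ifs <;> rw [mul_add] <;> omega

theorem le_mul_card_filter_val_mod (n : ℕ) {r i : ℕ} (hi : i < r) :
    n ≤ r * #{v : Fin n | v % r = i} + (r - 1) := by
  have := Nat.div_add_mod n r
  have := Nat.mod_lt n (i.zero_le.trans_lt hi)
  rw [card_filter_val_mod_eq n hi]
  split_ifs <;> rw [mul_add] <;> omega

end Fin

namespace SimpleGraph

theorem card_Iic_eq_two_pow_card_edgeFinset {V : Type*} [Fintype V]
    (G : SimpleGraph V) [DecidableRel G.Adj] :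
    Nat.card (Set.Iic G) = 2 ^ #G.edgeFinset := by
  classical
  rw [← card_powerset, ← Fintype.card_coe, ← Nat.card_eq_fintype_card]
  refine Nat.card_congr
    { toFun := fun H => ⟨H.1.edgeFinset, mem_powerset.2 (edgeFinset_subset_edgeFinset.2 H.2)⟩
      invFun := fun s => ⟨fromEdgeSet s, ?_⟩
      left_inv := fun H => ?_
      right_inv := fun s => ?_ }
  · exact (fromEdgeSet_mono (by simpa [← coe_subset] using mem_powerset.1 s.2)).trans
      (fromEdgeSet_edgeSet G).le
  · simp
  · ext e
    simpa using fun he => G.not_isDiag_of_mem_edgeSet (mem_edgeFinset.1 (mem_powerset.1 s.2 he))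

theorem degree_turanGraph_add_card_filter_val_mod (n r : ℕ) (v : Fin n) :
    (turanGraph n r).degree v + #{w : Fin n | w % r = v % r} = n := by
  rw [← card_neighborFinset_eq_degree, neighborFinset_eq_filter]
  simp only [turanGraph_adj, ne_comm (a := v.val % r)]
  rw [add_comm]
  simpa using card_filter_add_card_filter_not (s := univ) (fun w : Fin n => w.val % r = v % r)

theorem choose_two_mul_le_mul_card_edgeFinset_turanGraph (n r : ℕ) :
    n.choose 2 * (r - 1) ≤ r * #(turanGraph n r).edgeFinset := by
  rcases r.eq_zero_or_pos with rfl | hr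
  · simp
  have hdeg (v : Fin n) : (n - 1) * (r - 1) ≤ r * (turanGraph n r).degree v := by
    have h1 := degree_turanGraph_add_card_filter_val_mod n r v
    have h2 := Fin.mul_card_filter_val_mod_le n (Nat.mod_lt v hr)
    have hn : 1 ≤ n := v.pos
    have h3 : r * (turanGraph n r).degree v + r * #{w : Fin n | w % r = v % r} = r * n := by
      rw [← mul_add, h1]
    zify [hn, hr] at h2 h3 ⊢
    linarith
  have hchoose : n.choose 2 * 2 = n * (n - 1) := by
    rw [Nat.choose_two_right, Nat.div_two_mul_two_of_even (Nat.even_mul_pred_self n)]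
  have hsum : n * ((n - 1) * (r - 1)) ≤ 2 * (r * #(turanGraph n r).edgeFinset) := by
    rw [mul_left_comm 2, ← sum_degrees_eq_twice_card_edges, mul_sum]
    simpa using sum_le_sum fun v (_ : v ∈ univ) => hdeg v
  nlinarith

theorem isClique_compl_filter_val_mod {n r : ℕ} {H : SimpleGraph (Fin n)}
    (hH : H ≤ turanGraph n r) (i : ℕ) :
    Hᶜ.IsClique ({v : Fin n | v % r = i} : Finset (Fin n)) := by
  intro u hu v hv huv
  simp only [coe_filter, mem_univ, true_and, Set.mem_ofPred_eq] at hu hv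
  exact ⟨huv, fun hadj => turanGraph_adj.1 (hH hadj) (hu.trans hv.symm)⟩

theorem exists_balanced_cliques_compl_of_le_turanGraph {n : ℕ} {H : SimpleGraph (Fin n)}
    (hH : H ≤ turanGraph n 4) : ∃ Y : Fin 4 → Finset (Fin n),
      (∀ i j, i ≠ j → Disjoint (Y i) (Y j)) ∧ (∀ v, ∃ i, v ∈ Y i) ∧
      ∀ i, Hᶜ.IsClique (Y i : Set (Fin n)) ∧
        ((n : ℝ) - 3) / 4 ≤ ((Y i).card : ℝ) ∧
        ((Y i).card : ℝ) ≤ ((n : ℝ) + 3) / 4 := by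
  refine ⟨fun i => {v | (v : ℕ) % 4 = i}, fun i j hij => ?_, fun v => ?_,
    fun i => ⟨isClique_compl_filter_val_mod hH i, ?_, ?_⟩⟩
  · exact disjoint_filter.2 fun _ _ hi hj => hij (Fin.ext (hi.symm.trans hj))
  · exact ⟨⟨v % 4, Nat.mod_lt _ four_pos⟩, by simp⟩
  · have := Fin.le_mul_card_filter_val_mod n i.isLt
    rw [div_le_iff₀ four_pos, sub_le_iff_le_add]
    exact_mod_cast (by omega : n ≤ #{v : Fin n | (v : ℕ) % 4 = i} * 4 + 3)
  · have := Fin.mul_card_filter_val_mod_le n i.isLt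
    rw [le_div_iff₀ four_pos]
    exact_mod_cast (by omega : #{v : Fin n | (v : ℕ) % 4 = i} * 4 ≤ n + 3)

end SimpleGraph

/-- The number of labeled graphs on `Fin n` whose vertex set can be partitioned
into four cliques, each of size between `(n-3)/4` and `(n+3)/4`, is at least
`2 ^ ((3/4)·C(n,2) - 3n)`. -/
theorem stmt3 (n : ℕ) :
    (2 : ℝ) ^ ((3 / 4 : ℝ) * n.choose 2 - 3 * n) ≤
      Nat.card {G : SimpleGraph (Fin n) // ∃ Y : Fin 4 → Finset (Fin n),
        (∀ i j, i ≠ j → Disjoint (Y i) (Y j)) ∧ (∀ v, ∃ i, v ∈ Y i) ∧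
        ∀ i, G.IsClique (Y i : Set (Fin n)) ∧
          ((n : ℝ) - 3) / 4 ≤ ((Y i).card : ℝ) ∧ ((Y i).card : ℝ) ≤ ((n : ℝ) + 3) / 4} := by
  refine le_trans ?_ (Nat.cast_le.2 (Nat.card_le_card_of_injective
    (fun H : Set.Iic (turanGraph n 4) =>
      ⟨H.1ᶜ, exists_balanced_cliques_compl_of_le_turanGraph H.2⟩)
    fun H K h => Subtype.ext (compl_injective (congrArg Subtype.val h))))
  rw [card_Iic_eq_two_pow_card_edgeFinset, Nat.cast_pow, Nat.cast_ofNat, ← Real.rpow_natCast]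
  have hedges : (n.choose 2 : ℝ) * 3 ≤ 4 * #(turanGraph n 4).edgeFinset := by
    exact_mod_cast choose_two_mul_le_mul_card_edgeFinset_turanGraph n 4
  gcongr
  · norm_num
  · linarith [(n.cast_nonneg : (0 : ℝ) ≤ n)]
end

section
/- Let G be a graph with two great partitions (X₁,...,X₄) and (X′₁,...,X′₄), both satisfying: (a) any two vertices in the same clique-part have at least 13n/32 common neighbors; (b) any two vertices in different parts have fewer than 13n/32 common neighbors; (c) for every part Xᵢ and every vertex v ∉ Xᵢ, there are two vertices of Xᵢ forming an induced path of length 2 with v; (d) X₄ does not induce a clique. Then {X₁,X₂,X₃} = {X′₁,X′₂,X′₃} as sets of parts and X₄ = X′₄. -/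
/-- An ordered partition `X : Fin 4 → Finset (Fin n)` of the vertex set of `G` is *great*
if the first three parts induce cliques and the fourth induces the disjoint union of two
cliques. -/
def IsGreatPartition {n : ℕ} (G : SimpleGraph (Fin n)) (X : Fin 4 → Finset (Fin n)) : Prop :=
  (∀ i j, i ≠ j → Disjoint (X i) (X j)) ∧ (∀ v, ∃ i, v ∈ X i) ∧
  (∀ i : Fin 4, (i : ℕ) < 3 → G.IsClique (X i : Set (Fin n))) ∧
  ∃ C D : Finset (Fin n), X 3 = C ∪ D ∧ Disjoint C D ∧
    G.IsClique (C : Set (Fin n)) ∧ G.IsClique (D : Set (Fin n)) ∧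
    ∀ u ∈ C, ∀ v ∈ D, ¬ G.Adj u v

/-- The three vertices `u, v, w` induce a path (on three vertices) in `G`. -/
def InducesPath {n : ℕ} (G : SimpleGraph (Fin n)) (u v w : Fin n) : Prop :=
  (G.Adj v u ∧ G.Adj v w ∧ ¬ G.Adj u w) ∨
  (G.Adj u v ∧ G.Adj u w ∧ ¬ G.Adj v w) ∨
  (G.Adj w u ∧ G.Adj w v ∧ ¬ G.Adj u v)

/-- The property (P*) of a great partition:
(a) two vertices in the same clique-part have at least `13n/32` common neighbours;
(b) two vertices in different parts have fewer than `13n/32` common neighbours;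
(c) for every part `X i` and every vertex `v ∉ X i`, some two vertices of `X i` form an
induced path with `v`;
(d) the fourth part does not induce a clique. -/
def Pstar {n : ℕ} (G : SimpleGraph (Fin n)) (X : Fin 4 → Finset (Fin n)) : Prop :=
  (∀ i : Fin 4, G.IsClique (X i : Set (Fin n)) →
      ∀ u ∈ X i, ∀ v ∈ X i, u ≠ v →
        (13 * n : ℝ) ≤ 32 * (Nat.card {w : Fin n // G.Adj u w ∧ G.Adj v w} : ℝ)) ∧
  (∀ i j : Fin 4, i ≠ j → ∀ u ∈ X i, ∀ v ∈ X j,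
      (32 * (Nat.card {w : Fin n // G.Adj u w ∧ G.Adj v w} : ℝ)) < 13 * n) ∧
  (∀ i : Fin 4, ∀ v, v ∉ X i →
      ∃ u ∈ X i, ∃ w ∈ X i, u ≠ w ∧ u ≠ v ∧ w ≠ v ∧ InducesPath G u v w) ∧
  ¬ G.IsClique (X 3 : Set (Fin n))

open Finset

/-
Two vertices of a clique part of one partition have many common neighbours, vertices of
different parts few, so every clique part of one partition lies inside a single part of the
other. A clique part `X' j` of the second partition that fell inside the fourth part `C ∪ D`
of the first would, by (c), dominate the graph; since there are no `C`–`D` edges it would then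
meet both `C` and `D`, which are nonempty by (d), and could not be a clique. Hence the fourth
parts agree, and then each clique part, nonempty by (c), equals a clique part of the other
partition.
-/

lemma InducesPath.adj_or_adj {n : ℕ} {G : SimpleGraph (Fin n)} {u v w : Fin n}
    (h : InducesPath G u v w) : G.Adj v u ∨ G.Adj v w := by
  rcases h with ⟨h, -, -⟩ | ⟨h, -, -⟩ | ⟨-, h, -⟩
  exacts [Or.inl h, Or.inl h.symm, Or.inr h.symm]

lemma exists_mem_of_dominating {n : ℕ} {G : SimpleGraph (Fin n)} {Y C D : Finset (Fin n)}
    (hY : Y ⊆ C ∪ D) (hCD : ∀ x ∈ C, ∀ y ∈ D, ¬ G.Adj x y)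
    (hdom : ∀ v ∉ Y, ∃ u ∈ Y, G.Adj v u) {d : Fin n} (hd : d ∈ D) : ∃ y ∈ Y, y ∈ D := by
  by_cases hdY : d ∈ Y
  · exact ⟨d, hdY, hd⟩
  obtain ⟨u, huY, hdu⟩ := hdom d hdY
  rcases mem_union.mp (hY huY) with huC | huD
  · exact absurd hdu.symm (hCD u huC d hd)
  · exact ⟨u, huY, huD⟩

section

variable {n : ℕ} {G : SimpleGraph (Fin n)} {X X' : Fin 4 → Finset (Fin n)}

lemma IsGreatPartition.eq_of_mem (hX : IsGreatPartition G X) {i j : Fin 4} {v : Fin n}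
    (hi : v ∈ X i) (hj : v ∈ X j) : i = j := by
  by_contra hij
  exact disjoint_left.mp (hX.1 i j hij) hi hj

lemma IsGreatPartition.isClique_of_ne (hX : IsGreatPartition G X) {i : Fin 4} (hi : i ≠ 3) :
    G.IsClique (X i : Set (Fin n)) :=
  hX.2.2.1 i (by fin_cases i <;> simp_all)

lemma IsGreatPartition.not_isClique_of_dominating (hX : IsGreatPartition G X)
    (h3 : ¬ G.IsClique (X 3 : Set (Fin n))) {Y : Finset (Fin n)} (hY : Y ⊆ X 3)
    (hdom : ∀ v ∉ Y, ∃ u ∈ Y, G.Adj v u) : ¬ G.IsClique (Y : Set (Fin n)) := by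
  obtain ⟨C, D, hX3, hdisj, hC, hD, hCD⟩ := hX.2.2.2
  rw [hX3] at h3 hY
  have hC_ne : C.Nonempty := by
    by_contra h
    rw [not_nonempty_iff_eq_empty.mp h, empty_union] at h3
    exact h3 hD
  have hD_ne : D.Nonempty := by
    by_contra h
    rw [not_nonempty_iff_eq_empty.mp h, union_empty] at h3
    exact h3 hC
  obtain ⟨c, hcY, hcC⟩ := exists_mem_of_dominating (union_comm C D ▸ hY)
    (fun x hx y hy h => hCD y hy x hx h.symm) hdom hC_ne.choose_spec
  obtain ⟨d, hdY, hdD⟩ := exists_mem_of_dominating hY hCD hdom hD_ne.choose_spec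
  intro hYc
  exact hCD c hcC d hdD (hYc hcY hdY fun hcd => disjoint_left.mp hdisj hcC (hcd ▸ hdD))

namespace Pstar

lemma exists_adj (hP : Pstar G X) (i : Fin 4) : ∀ v ∉ X i, ∃ u ∈ X i, G.Adj v u := by
  intro v hv
  obtain ⟨u, hu, w, hw, -, -, -, hpath⟩ := hP.2.2.1 i v hv
  rcases hpath.adj_or_adj with h | h
  exacts [⟨u, hu, h⟩, ⟨w, hw, h⟩]

lemma nonempty (hP : Pstar G X) (i : Fin 4) : (X i).Nonempty := by
  by_contra h
  rw [not_nonempty_iff_eq_empty] at h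
  have : IsEmpty (Fin n) := ⟨fun v => by simpa [h] using hP.exists_adj i v (by simp [h])⟩
  exact hP.2.2.2 fun v => isEmptyElim v

lemma eq_of_mem_of_isClique (hP : Pstar G X) (hX' : IsGreatPartition G X') (hP' : Pstar G X')
    {i j k : Fin 4} (hXi : G.IsClique (X i : Set (Fin n))) {u v : Fin n}
    (hu : u ∈ X i) (hv : v ∈ X i) (hj : u ∈ X' j) (hk : v ∈ X' k) : j = k := by
  rcases eq_or_ne u v with rfl | huv
  · exact hX'.eq_of_mem hj hk
  by_contra hjk
  have many := hP.1 i hXi u hu v hv huv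
  have few := hP'.2.1 j k hjk u hj v hk
  linarith

lemma subset_of_mem_of_isClique (hP : Pstar G X) (hX' : IsGreatPartition G X')
    (hP' : Pstar G X') {i j : Fin 4} (hXi : G.IsClique (X i : Set (Fin n))) {v : Fin n}
    (hi : v ∈ X i) (hj : v ∈ X' j) : X i ⊆ X' j := by
  intro w hw
  obtain ⟨k, hk⟩ := hX'.2.1 w
  rwa [hP.eq_of_mem_of_isClique hX' hP' hXi hw hi hk hj] at hk

end Pstar

lemma fourth_part_subset (hX : IsGreatPartition G X) (hX' : IsGreatPartition G X')
    (hP : Pstar G X) (hP' : Pstar G X') : X 3 ⊆ X' 3 := by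
  intro v hv
  obtain ⟨j, hj⟩ := hX'.2.1 v
  by_cases hj3 : j = 3
  · rwa [hj3] at hj
  have hclique := hX'.isClique_of_ne hj3
  have hsub := hP'.subset_of_mem_of_isClique hX hP hclique hj hv
  exact absurd hclique (hX.not_isClique_of_dominating hP.2.2.2 hsub (hP'.exists_adj j))

lemma clique_part_mem (hX : IsGreatPartition G X) (hX' : IsGreatPartition G X')
    (hP : Pstar G X) (hP' : Pstar G X') {i : Fin 4} (hi : i ≠ 3) :
    X i ∈ ({X' 0, X' 1, X' 2} : Set (Finset (Fin n))) := by
  obtain ⟨v, hv⟩ := hP.nonempty i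
  obtain ⟨j, hj⟩ := hX'.2.1 v
  have hj3 : j ≠ 3 := by
    rintro rfl
    exact hi (hX.eq_of_mem hv (fourth_part_subset hX' hX hP' hP hj))
  have hXi : X i = X' j :=
    (hP.subset_of_mem_of_isClique hX' hP' (hX.isClique_of_ne hi) hv hj).antisymm
      (hP'.subset_of_mem_of_isClique hX hP (hX'.isClique_of_ne hj3) hj hv)
  rw [hXi]
  fin_cases j <;> simp_all

end

/-- If a graph on `n` vertices has two great partitions both satisfying
(P*)(a)-(d), then they coincide: the sets of the first three parts agree and the fourth
parts are equal. -/
theorem stmt14 {n : ℕ} (G : SimpleGraph (Fin n)) (X X' : Fin 4 → Finset (Fin n))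
    (hX : IsGreatPartition G X) (hX' : IsGreatPartition G X')
    (hP : Pstar G X) (hP' : Pstar G X') :
    ({X 0, X 1, X 2} : Set (Finset (Fin n))) = {X' 0, X' 1, X' 2} ∧ X 3 = X' 3 := by
  refine ⟨Set.Subset.antisymm ?_ ?_,
    (fourth_part_subset hX hX' hP hP').antisymm (fourth_part_subset hX' hX hP' hP)⟩
  all_goals simp only [Set.insert_subset_iff, Set.singleton_subset_iff]
  · exact ⟨clique_part_mem hX hX' hP hP' (by decide), clique_part_mem hX hX' hP hP' (by decide),
      clique_part_mem hX hX' hP hP' (by decide)⟩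
  · exact ⟨clique_part_mem hX' hX hP' hP (by decide), clique_part_mem hX' hX hP' hP (by decide),
      clique_part_mem hX' hX hP' hP (by decide)⟩
end
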